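/- With G defined as G(x) = x + Σ_{i=1}^m α_i φ((x−ζ_i)/ν)(x−ζ_i)|x−ζ_i|, where φ(u) = (1−u²)⁴·1_{|u|≤1} and ν ∈ (0, min{min_i 1/(8|α_i|), min_i (ζ_{i+1}−ζ_i)/2}), the derivative G' is Lipschitz continuous on ℝ. -/

import Mathlib

/-!
With `k u = φ u * (u * |u|)`, the substitution `u = (x - ζᵢ) / ν` gives
`G x = x + ∑ αᵢ ν |ν| k ((x - ζᵢ) / ν)`, so it suffices that `k'` is Lipschitz. Both
`φ u = max (1 - u²) 0 ^ 4` and `u * |u|` are `C¹`, and the product rule gives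
`k' u = Q (min |u| 1)` with `Q t = 2 t (1 - t²)³ (1 - 5 t²)`. A polynomial is Lipschitz on `[0, 1]`
and `u ↦ min |u| 1` is `1`-Lipschitz with values in `[0, 1]`.
-/

open Set Filter NNReal

/-- The bump function used for the transformation `G`. -/
noncomputable def bump (u : ℝ) : ℝ := if |u| ≤ 1 then (1 - u ^ 2) ^ 4 else 0

/-- The transformation `G` built from the bump function. -/
noncomputable def Gtrans {m : ℕ} (ζ α : Fin m → ℝ) (ν : ℝ) (x : ℝ) : ℝ :=
  x + ∑ i, α i * bump ((x - ζ i) / ν) * ((x - ζ i) * |x - ζ i|)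

theorem hasDerivAt_of_eqOn_Iic_of_eqOn_Ici {f g h f' : ℝ → ℝ} {a : ℝ}
    (hg : ∀ x ≤ a, HasDerivAt g (f' x) x) (hh : ∀ x, a ≤ x → HasDerivAt h (f' x) x)
    (hfg : EqOn f g (Iic a)) (hfh : EqOn f h (Ici a)) (x : ℝ) : HasDerivAt f (f' x) x := by
  rcases lt_trichotomy x a with hx | rfl | hx
  · exact (hg x hx.le).congr_of_eventuallyEq <| eventually_of_mem (Iic_mem_nhds hx) hfg
  · have := ((hg x le_rfl).hasDerivWithinAt.congr hfg (hfg self_mem_Iic)).union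
      ((hh x le_rfl).hasDerivWithinAt.congr hfh (hfh self_mem_Ici))
    rwa [Iic_union_Ici, hasDerivWithinAt_univ] at this
  · exact (hh x hx.le).congr_of_eventuallyEq <| eventually_of_mem (Ici_mem_nhds hx) hfh

theorem hasDerivAt_mul_abs (x : ℝ) : HasDerivAt (fun y => y * |y|) (2 * |x|) x := by
  refine hasDerivAt_of_eqOn_Iic_of_eqOn_Ici (f' := fun y => 2 * |y|) (g := fun y => -y ^ 2)
    (h := fun y => y ^ 2) (a := 0)
    (fun y hy => ?_) (fun y hy => ?_) (fun y hy => ?_) (fun y hy => ?_) x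
  · simpa [abs_of_nonpos hy] using (hasDerivAt_pow 2 y).fun_neg
  · simpa [abs_of_nonneg hy] using hasDerivAt_pow 2 y
  · simp [abs_of_nonpos (mem_Iic.mp hy), sq]
  · simp [abs_of_nonneg (mem_Ici.mp hy), sq]

theorem hasDerivAt_max_zero_pow {n : ℕ} (hn : 2 ≤ n) (x : ℝ) :
    HasDerivAt (fun y => max y 0 ^ n) (n * max x 0 ^ (n - 1)) x := by
  refine hasDerivAt_of_eqOn_Iic_of_eqOn_Ici (f' := fun y => n * max y 0 ^ (n - 1))
    (g := fun _ => 0) (h := fun y => y ^ n) (a := 0)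
    (fun y hy => ?_) (fun y hy => ?_) (fun y hy => ?_) (fun y hy => ?_) x
  · rw [max_eq_right hy, zero_pow (by omega), mul_zero]
    exact hasDerivAt_const y 0
  · simpa [max_eq_left hy] using hasDerivAt_pow n y
  · simp [max_eq_right (mem_Iic.mp hy), zero_pow (by omega : n ≠ 0)]
  · simp [max_eq_left (mem_Ici.mp hy)]

theorem bump_eq_max_pow (u : ℝ) : bump u = max (1 - u ^ 2) 0 ^ 4 := by
  simp only [bump, ← sq_le_one_iff_abs_le_one]
  split_ifs with h
  · rw [max_eq_left (by linarith)]
  · rw [max_eq_right (by linarith), zero_pow four_ne_zero]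

theorem hasDerivAt_bump (u : ℝ) : HasDerivAt bump (4 * max (1 - u ^ 2) 0 ^ 3 * -(2 * u)) u := by
  have := (hasDerivAt_max_zero_pow (n := 4) (by norm_num) (1 - u ^ 2)).comp u
    (by simpa using (hasDerivAt_pow 2 u).const_sub 1)
  rw [funext bump_eq_max_pow]
  simpa [Function.comp_def] using this

noncomputable def bumpKernel (u : ℝ) : ℝ := bump u * (u * |u|)

def bumpKernelDerivPoly (t : ℝ) : ℝ := 2 * t * (1 - t ^ 2) ^ 3 * (1 - 5 * t ^ 2)

-- `bumpKernelDerivPoly 1 = 0`, so clamping `|u|` at `1` continues the derivative by `0`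
-- outside `[-1, 1]`.
noncomputable def bumpKernelDeriv (u : ℝ) : ℝ := bumpKernelDerivPoly (min |u| 1)

theorem hasDerivAt_bumpKernel (u : ℝ) : HasDerivAt bumpKernel (bumpKernelDeriv u) u := by
  refine ((hasDerivAt_bump u).mul (hasDerivAt_mul_abs u)).congr_deriv ?_
  rw [bumpKernelDeriv, bumpKernelDerivPoly, bump_eq_max_pow]
  have hu2 : u ^ 2 = |u| ^ 2 := (sq_abs u).symm
  by_cases h : |u| ≤ 1
  · rw [min_eq_left h, max_eq_left (by nlinarith [abs_nonneg u]), hu2]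
    have : u * (u * |u|) = |u| ^ 3 := by rw [← mul_assoc, ← sq, hu2]; ring
    linear_combination (-8 * (1 - |u| ^ 2) ^ 3) * this
  · rw [min_eq_right (le_of_not_ge h), max_eq_right (by nlinarith [abs_nonneg u])]
    norm_num

theorem exists_lipschitzWith_bumpKernelDeriv : ∃ K, LipschitzWith K bumpKernelDeriv := by
  obtain ⟨K, hK⟩ := (show ContDiff ℝ 1 bumpKernelDerivPoly by
    unfold bumpKernelDerivPoly; fun_prop).contDiffOn.exists_lipschitzOnWith (s := Icc 0 1)
    one_ne_zero (convex_Icc 0 1) isCompact_Icc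
  have hmin : LipschitzWith 1 fun u : ℝ => min |u| 1 := lipschitzWith_one_norm.min_const 1
  refine ⟨K * 1, lipschitzOnWith_univ.mp <| hK.comp hmin.lipschitzOnWith fun u _ => ?_⟩
  exact ⟨le_min (abs_nonneg u) zero_le_one, min_le_right _ _⟩

theorem LipschitzWith.finset_sum {α ι E : Type*} [PseudoEMetricSpace α] [SeminormedAddCommGroup E]
    (s : Finset ι) {f : ι → α → E} {K : ι → ℝ≥0} (hf : ∀ i ∈ s, LipschitzWith (K i) (f i)) :
    LipschitzWith (∑ i ∈ s, K i) fun x => ∑ i ∈ s, f i x := by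
  classical
  induction s using Finset.induction_on with
  | empty => simpa using LipschitzWith.const (0 : E)
  | insert i s hi ih =>
    simp only [Finset.sum_insert hi]
    exact (hf i (s.mem_insert_self i)).add (ih fun j hj => hf j (Finset.mem_insert_of_mem hj))

section Gtrans

variable {m : ℕ} (ζ α : Fin m → ℝ) {ν : ℝ}

theorem Gtrans_eq_bumpKernel (hν : ν ≠ 0) (x : ℝ) :
    Gtrans ζ α ν x = x + ∑ i, α i * (ν * |ν|) * bumpKernel ((x - ζ i) / ν) := by
  simp only [Gtrans, bumpKernel, abs_div]
  congr 1
  refine Finset.sum_congr rfl fun i _ => ?_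
  have : |ν| ≠ 0 := abs_ne_zero.mpr hν
  field_simp

theorem hasDerivAt_Gtrans (hν : ν ≠ 0) (x : ℝ) :
    HasDerivAt (Gtrans ζ α ν) (1 + ∑ i, α i * |ν| * bumpKernelDeriv ((x - ζ i) / ν)) x := by
  rw [funext (Gtrans_eq_bumpKernel ζ α hν)]
  refine (hasDerivAt_id x).add (HasDerivAt.fun_sum fun i _ => ?_)
  have hinner : HasDerivAt (fun y => (y - ζ i) / ν) ν⁻¹ x := by
    simpa using ((hasDerivAt_id x).sub_const (ζ i)).div_const ν
  refine (((hasDerivAt_bumpKernel _).comp x hinner).const_mul (α i * (ν * |ν|))).congr_deriv ?_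
  field_simp

end Gtrans

theorem stmt_12_general (m : ℕ) (ζ α : Fin m → ℝ) (ν : ℝ) (hν : 0 < ν) :
    ∃ L : NNReal, LipschitzWith L (deriv (Gtrans ζ α ν)) := by
  obtain ⟨K, hK⟩ := exists_lipschitzWith_bumpKernelDeriv
  have hderiv : deriv (Gtrans ζ α ν) =
      fun x => 1 + ∑ i, α i * |ν| * bumpKernelDeriv ((x - ζ i) / ν) :=
    funext fun x => (hasDerivAt_Gtrans ζ α hν.ne' x).deriv
  have hinner (c : ℝ) : LipschitzWith ‖ν⁻¹‖₊ fun x : ℝ => (x - c) / ν := by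
    simpa [div_eq_inv_mul, Function.comp_def] using
      (lipschitzWith_smul ν⁻¹).comp (IsometryEquiv.subRight c).isometry.lipschitz
  rw [hderiv]
  exact ⟨_, (LipschitzWith.const 1).add <| LipschitzWith.finset_sum _ fun i _ =>
    (lipschitzWith_smul (α i * |ν|)).comp (hK.comp (hinner (ζ i)))⟩

/-- The derivative `G'` is Lipschitz continuous on ℝ. -/
theorem stmt_12 (m : ℕ) (ζ α : Fin m → ℝ) (hζ : StrictMono ζ) (ν : ℝ) (hν : 0 < ν)
    (hν1 : ∀ i, 8 * |α i| * ν < 1)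
    (hν2 : ∀ i : Fin m, ∀ h : i.val + 1 < m, 2 * ν < ζ ⟨i.val + 1, h⟩ - ζ i) :
    ∃ L : NNReal, LipschitzWith L (deriv (Gtrans ζ α ν)) :=
  stmt_12_general m ζ α ν hν
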